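/- arXiv:0705.2112 — 3 statements merged into one kernel-verified Lean document; each statement's English description precedes it below -/
import Mathlib

section
/- Let 0 < a₂, 0 < c with a₂ ≠ c, and define a₃ = (1/√a₂ − 1/√c)^(−2) and a₁ = 3a₂c / (4(a₂ + c − √(c·a₂))). Then the identity 1/c² + 1/a₂² + 1/a₃² − 2(1/(c·a₂) + 1/(c·a₃) + 1/(a₂·a₃)) = 0 holds, and a₁ = 3c·a₂·a₃ / (2(a₂·a₃ + c(a₂ + a₃))). -/
/-!
Put `x = 1/c`, `y = 1/a₂`, `z = 1/a₃`. The left-hand side of the identity is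
`x² + y² + z² - 2(xy + xz + yz)`, which vanishes exactly when `±√x ± √y ± √z = 0`; the definition
of `a₃` says precisely that `√z = |√y - √x|`. Dividing numerator and denominator by `c a₂ a₃`,
the claimed value of `a₁` is `3 / (2(x + y + z))`, and with `u = √x`, `v = √y` one has
`x + y + z = 2(u² + v² - uv)`, which is the given formula for `a₁` after multiplying through by `c a₂`.
-/

lemma sq_add_sq_add_sq_sub_two_mul_eq_zero {R : Type*} [CommRing R] (u v : R) :
    (u ^ 2) ^ 2 + (v ^ 2) ^ 2 + ((v - u) ^ 2) ^ 2
      - 2 * (u ^ 2 * v ^ 2 + u ^ 2 * (v - u) ^ 2 + v ^ 2 * (v - u) ^ 2) = 0 := by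
  ring

lemma one_div_sq_add_sq_add_sq_sub_eq_zero {K : Type*} [Field K] {c a₂ a₃ u v : K}
    (hc : c⁻¹ = u ^ 2) (ha₂ : a₂⁻¹ = v ^ 2) (ha₃ : a₃⁻¹ = (v - u) ^ 2) :
    1 / c ^ 2 + 1 / a₂ ^ 2 + 1 / a₃ ^ 2
      - 2 * (1 / (c * a₂) + 1 / (c * a₃) + 1 / (a₂ * a₃)) = 0 := by
  simp only [one_div, ← inv_pow, mul_inv, hc, ha₂, ha₃]
  exact sq_add_sq_add_sq_sub_two_mul_eq_zero u v

lemma div_mul_add_mul_eq_div_inv_add_inv_add_inv {K : Type*} [Field K] {c a₂ a₃ : K}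
    (hc : c ≠ 0) (ha₂ : a₂ ≠ 0) (ha₃ : a₃ ≠ 0) :
    3 * c * a₂ * a₃ / (2 * (a₂ * a₃ + c * (a₂ + a₃))) = 3 / (2 * (c⁻¹ + a₂⁻¹ + a₃⁻¹)) := by
  field_simp
  ring

lemma div_sub_sqrt_mul_eq_div_inv_sqrt {c a₂ : ℝ} (hc : 0 < c) (ha₂ : 0 < a₂) :
    3 * a₂ * c / (4 * (a₂ + c - √(c * a₂)))
      = 3 / (4 * ((√c)⁻¹ ^ 2 + (√a₂)⁻¹ ^ 2 - (√c)⁻¹ * (√a₂)⁻¹)) := by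
  rw [Real.sqrt_mul hc.le]
  have hs := Real.sqrt_pos.mpr ha₂
  have ht := Real.sqrt_pos.mpr hc
  have hs2 := Real.sq_sqrt ha₂.le
  have ht2 := Real.sq_sqrt hc.le
  set s := √a₂
  set t := √c
  rw [← hs2, ← ht2]
  field_simp

theorem stmt_0 (a₂ c : ℝ) (ha₂ : 0 < a₂) (hc : 0 < c) (hne : a₂ ≠ c)
    (a₃ a₁ : ℝ)
    (ha₃ : a₃ = ((1 / Real.sqrt a₂ - 1 / Real.sqrt c) ^ 2)⁻¹)
    (ha₁ : a₁ = 3 * a₂ * c / (4 * (a₂ + c - Real.sqrt (c * a₂)))) :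
    1 / c ^ 2 + 1 / a₂ ^ 2 + 1 / a₃ ^ 2
      - 2 * (1 / (c * a₂) + 1 / (c * a₃) + 1 / (a₂ * a₃)) = 0 ∧
    a₁ = 3 * c * a₂ * a₃ / (2 * (a₂ * a₃ + c * (a₂ + a₃))) := by
  set u := (√c)⁻¹
  set v := (√a₂)⁻¹
  have hu : c⁻¹ = u ^ 2 := by rw [inv_pow, Real.sq_sqrt hc.le]
  have hv : a₂⁻¹ = v ^ 2 := by rw [inv_pow, Real.sq_sqrt ha₂.le]
  have hw : a₃⁻¹ = (v - u) ^ 2 := by rw [ha₃, inv_inv, one_div, one_div]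
  have hvu : v - u ≠ 0 := by
    rw [sub_ne_zero, ne_eq, inv_inj, Real.sqrt_inj ha₂.le hc.le]
    exact hne
  have ha₃ne : a₃ ≠ 0 := by
    intro h
    apply pow_ne_zero 2 hvu
    rw [← hw, h, inv_zero]
  refine ⟨one_div_sq_add_sq_add_sq_sub_eq_zero hu hv hw, ?_⟩
  rw [ha₁, div_sub_sqrt_mul_eq_div_inv_sqrt hc ha₂,
    div_mul_add_mul_eq_div_inv_add_inv_add_inv hc.ne' ha₂.ne' ha₃ne, hu, hv, hw]
  ring
end

section
/- Let α > 1 and set b₁ = 1/(2α), b₂ = α/(α² + 1), b₃ = 1/α, b₄ = α/(α² − 1). Then there is a nonzero constant κ(α) such that the four numbers b₁, (b₁b₂)/(b₂ − b₁), (b₁b₃)/(b₃ − b₁), (b₁b₄)/(b₄ − b₁), after multiplication by κ(α), form a permutation of {b₁, b₂, b₃, b₄}. -/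
theorem stmt_6 (α : ℝ) (hα : 1 < α)
    (b₁ b₂ b₃ b₄ : ℝ)
    (hb₁ : b₁ = 1 / (2 * α)) (hb₂ : b₂ = α / (α ^ 2 + 1))
    (hb₃ : b₃ = 1 / α) (hb₄ : b₄ = α / (α ^ 2 - 1)) :
    ∃ κ : ℝ, κ ≠ 0 ∧
      ({κ * b₁, κ * (b₁ * b₂ / (b₂ - b₁)), κ * (b₁ * b₃ / (b₃ - b₁)),
        κ * (b₁ * b₄ / (b₄ - b₁))} : Set ℝ) = {b₁, b₂, b₃, b₄} := by
  have hα0 : α ≠ 0 := by positivity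
  have h1 : (α:ℝ)^2 - 1 ≠ 0 := by nlinarith
  have h2 : (α:ℝ)^2 + 1 ≠ 0 := by positivity
  have e2 : b₁ * b₂ / (b₂ - b₁) = b₄ := by
    subst hb₁ hb₂ hb₄
    rw [div_eq_iff]
    · field_simp; ring
    · rw [sub_ne_zero]
      intro h
      field_simp at h
      nlinarith
  have e3 : b₁ * b₃ / (b₃ - b₁) = b₃ := by
    subst hb₁ hb₃
    rw [div_eq_iff]
    · field_simp; ring
    · rw [sub_ne_zero]
      intro h
      field_simp at h
      norm_num at h
  have e4 : b₁ * b₄ / (b₄ - b₁) = b₂ := by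
    subst hb₁ hb₂ hb₄
    rw [div_eq_iff]
    · field_simp; ring
    · rw [sub_ne_zero]
      intro h
      field_simp at h
      nlinarith
  refine ⟨1, one_ne_zero, ?_⟩
  simp only [one_mul, e2, e3, e4]
  ext x
  simp only [Set.mem_insert_iff, Set.mem_singleton_iff]
  tauto
end

section
/- Let α = √(2/√3) and define a₁ = 1/(2α), a₂ = α/(α² + 1), a₃ = α/(α² − 1), c = 1/α. Then 1/c² + 1/a₂² + 1/a₃² − 2(1/(c·a₂) + 1/(c·a₃) + 1/(a₂·a₃)) = 0 and a₁ = 3c·a₂·a₃/(2(a₂·a₃ + c(a₂ + a₃))). -/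
/-!
Put `t = α²`. The reciprocals of `c, a₂, a₃` are `α, (t + 1)/α, (t - 1)/α`, so the Descartes-type
quadratic form in these reciprocals equals `(4 - 3t²)/t`, which vanishes exactly when `α⁴ = 4/3`;
and the second identity says `1/a₁ = (2/3)(1/c + 1/a₂ + 1/a₃)`, where the sum of reciprocals is `3α`
for every `α ≠ 0`.
-/

lemma sqrt_two_div_sqrt_three_pow_four : Real.sqrt (2 / Real.sqrt 3) ^ 4 = 4 / 3 := by
  rw [show (4 : ℕ) = 2 * 2 from rfl, pow_mul, Real.sq_sqrt (by positivity), div_pow,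
    Real.sq_sqrt (by norm_num)]
  norm_num

lemma descartes_form_reciprocals_eq (α : ℝ) (hα : α ≠ 0) :
    1 / (1 / α) ^ 2 + 1 / (α / (α ^ 2 + 1)) ^ 2 + 1 / (α / (α ^ 2 - 1)) ^ 2
      - 2 * (1 / (1 / α * (α / (α ^ 2 + 1))) + 1 / (1 / α * (α / (α ^ 2 - 1)))
        + 1 / (α / (α ^ 2 + 1) * (α / (α ^ 2 - 1))))
      = (4 - 3 * α ^ 4) / α ^ 2 := by
  have hα₂ : α ^ 2 + 1 ≠ 0 := by positivity
  field_simp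
  ring

lemma inv_add_inv_add_inv_eq (α : ℝ) (hα : α ≠ 0) :
    1 / (1 / α) + 1 / (α / (α ^ 2 + 1)) + 1 / (α / (α ^ 2 - 1)) = 3 * α := by
  simp only [one_div_div]
  field_simp
  ring

lemma three_mul_div_eq_three_div_sum_inv {c a b : ℝ} (hc : c ≠ 0) (ha : a ≠ 0) (hb : b ≠ 0) :
    3 * c * a * b / (2 * (a * b + c * (a + b))) = 3 / (2 * (1 / c + 1 / a + 1 / b)) := by
  field_simp
  ring_nf

theorem stmt_9 (α a₁ a₂ a₃ c : ℝ)
    (hα : α = Real.sqrt (2 / Real.sqrt 3))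
    (ha₁ : a₁ = 1 / (2 * α)) (ha₂ : a₂ = α / (α ^ 2 + 1))
    (ha₃ : a₃ = α / (α ^ 2 - 1)) (hc : c = 1 / α) :
    1 / c ^ 2 + 1 / a₂ ^ 2 + 1 / a₃ ^ 2
      - 2 * (1 / (c * a₂) + 1 / (c * a₃) + 1 / (a₂ * a₃)) = 0 ∧
    a₁ = 3 * c * a₂ * a₃ / (2 * (a₂ * a₃ + c * (a₂ + a₃))) := by
  have h₄ : α ^ 4 = 4 / 3 := hα ▸ sqrt_two_div_sqrt_three_pow_four
  have hα₀ : α ≠ 0 := by rintro rfl; norm_num at h₄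
  have hα₁ : α ^ 2 - 1 ≠ 0 := by
    intro h
    have : α ^ 4 = (α ^ 2) ^ 2 := by ring
    rw [this, sub_eq_zero.mp h] at h₄
    norm_num at h₄
  have hα₂ : α ^ 2 + 1 ≠ 0 := by positivity
  subst ha₁ ha₂ ha₃ hc
  refine ⟨by rw [descartes_form_reciprocals_eq α hα₀, h₄]; norm_num, ?_⟩
  rw [three_mul_div_eq_three_div_sum_inv (by simpa) (div_ne_zero hα₀ hα₂) (div_ne_zero hα₀ hα₁),
    inv_add_inv_add_inv_eq α hα₀]
  field_simp
end
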